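/- Let D be an abelian category with enough projectives and enough injectives, let X be a class of objects of D closed under isomorphisms, and let 0 → A → B → C → 0 be a short exact sequence in D. Then: (a) X^⊥-cores B ≤ max{X^⊥-cores A, X^⊥-cores C}; (b) X^⊥-cores C ≤ max{X^⊥-cores A − 1, X^⊥-cores B}; (c) X^⊥-cores A ≤ max{X^⊥-cores B, X^⊥-cores C + 1}. -/

import Mathlib

open CategoryTheory CategoryTheory.Limits

universe w v u

namespace Paper

variable {D : Type u} [Category.{v} D] [Abelian D]

section
variable [HasExt.{w} D]

/-- The right perpendicular class `X^⊥` of a class of objects: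
objects `M` with `Ext^i(A, M) = 0` for all `A` in the class and all `i ≥ 1`. -/
def perp (X : D → Prop) : D → Prop :=
  fun M => ∀ A, X A → ∀ i : ℕ, 1 ≤ i → Subsingleton (Abelian.Ext A M i)

end

/-- `CoresSeq W n M Z` : there is an exact sequence
`0 → M → W₀ → ⋯ → W_{n-1} → Z → 0` with each `Wᵢ` in `W`. -/
def CoresSeq (W : D → Prop) : ℕ → D → D → Prop
  | 0, M, Z => Nonempty (M ≅ Z)
  | n + 1, M, Z => ∃ (W₀ K : D) (f : M ⟶ W₀) (g : W₀ ⟶ K) (h : f ≫ g = 0),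
      W W₀ ∧ (ShortComplex.mk f g h).ShortExact ∧ CoresSeq W n K Z

/-- The `W`-coresolution dimension of an object, valued in `ℕ∞`:
the least `n` such that there is an exact sequence `0 → M → W₀ → ⋯ → Wₙ → 0`
with all `Wᵢ` in `W` (and `∞` if there is no such sequence). -/
noncomputable def coresDim (W : D → Prop) (M : D) : ℕ∞ :=
  sInf {n : ℕ∞ | ∃ m : ℕ, n = (m : ℕ∞) ∧ ∃ Z, W Z ∧ CoresSeq W m M Z}

end Paper

/-!
`X^⊥-cores M ≤ n` holds exactly when `Ext^i(P, M) = 0` for all `P ∈ X` and all `i > n`: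
a coresolution by objects of `X^⊥` shifts the vanishing down to its last term, and conversely
injectives lie in `X^⊥`, so embedding into injectives builds the coresolution step by step.
In these terms all three inequalities are read off the long exact sequence of `Ext(P, -)`
applied to `0 → A → B → C → 0`.
-/

open Abelian

lemma ENat.le_max_of_forall_natCast_le {a b c : ℕ∞}
    (h : ∀ n : ℕ, a ≤ n → b ≤ n → c ≤ n) : c ≤ max a b := by
  cases hab : max a b using ENat.recTopCoe with
  | top => exact le_top
  | coe n => exact h n (hab ▸ le_max_left a b) (hab ▸ le_max_right a b)

section Ext

variable {D : Type u} [Category.{v} D] [Abelian D] [HasExt.{w} D]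

lemma CategoryTheory.Abelian.Ext.subsingleton_of_iso (P : D) {M M' : D} (e : M ≅ M') (i : ℕ)
    [Subsingleton (Ext P M i)] : Subsingleton (Ext P M' i) := by
  refine subsingleton_of_forall_eq 0 fun x => ?_
  rw [← x.comp_mk₀_id, ← e.inv_hom_id, ← Ext.mk₀_comp_mk₀, ← Ext.comp_assoc_of_second_deg_zero,
    Subsingleton.elim (x.comp (Ext.mk₀ e.inv) (add_zero i)) 0, Ext.zero_comp]

namespace CategoryTheory.ShortComplex.ShortExact

variable {S : ShortComplex D} (hS : S.ShortExact) (P : D) (i : ℕ)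
include hS

lemma subsingleton_ext_X₂ [Subsingleton (Ext P S.X₁ i)] [Subsingleton (Ext P S.X₃ i)] :
    Subsingleton (Ext P S.X₂ i) := by
  refine subsingleton_of_forall_eq 0 fun x₂ => ?_
  obtain ⟨x₁, rfl⟩ := Ext.covariant_sequence_exact₂ P hS x₂ (Subsingleton.elim _ _)
  rw [Subsingleton.elim x₁ 0, Ext.zero_comp]

lemma subsingleton_ext_X₁ [Subsingleton (Ext P S.X₃ i)] [Subsingleton (Ext P S.X₂ (i + 1))] :
    Subsingleton (Ext P S.X₁ (i + 1)) := by
  refine subsingleton_of_forall_eq 0 fun x₁ => ?_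
  obtain ⟨x₃, rfl⟩ := Ext.covariant_sequence_exact₁ P hS x₁ (Subsingleton.elim _ _) rfl
  rw [Subsingleton.elim x₃ 0, Ext.zero_comp]

lemma subsingleton_ext_X₃ [Subsingleton (Ext P S.X₂ i)] [Subsingleton (Ext P S.X₁ (i + 1))] :
    Subsingleton (Ext P S.X₃ i) := by
  refine subsingleton_of_forall_eq 0 fun x₃ => ?_
  obtain ⟨x₂, rfl⟩ := Ext.covariant_sequence_exact₃ P hS x₃ rfl (Subsingleton.elim _ _)
  rw [Subsingleton.elim x₂ 0, Ext.zero_comp]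

end CategoryTheory.ShortComplex.ShortExact

end Ext

namespace Paper

variable {D : Type u} [Category.{v} D] [Abelian D]

lemma coresDim_le_iff (W : D → Prop) (M : D) (n : ℕ) :
    coresDim W M ≤ n ↔ ∃ m ≤ n, ∃ Z, W Z ∧ CoresSeq W m M Z := by
  have hlt : ∀ m : ℕ, (m : ℕ∞) < n + 1 ↔ m ≤ n := fun m => by norm_cast; omega
  rw [← ENat.lt_add_one_iff (ENat.natCast_ne_top n), coresDim, sInf_lt_iff]
  constructor
  · rintro ⟨_, ⟨m, rfl, hm⟩, hmn⟩
    exact ⟨m, (hlt m).mp hmn, hm⟩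
  · rintro ⟨m, hmn, hm⟩
    exact ⟨m, ⟨m, rfl, hm⟩, (hlt m).mpr hmn⟩

section Perp

variable [HasExt.{w} D]

def ExtVanishesAbove (X : D → Prop) (n : ℕ) (M : D) : Prop :=
  ∀ P, X P → ∀ i : ℕ, n < i → Subsingleton (Ext P M i)

variable {X : D → Prop}

lemma extVanishesAbove_zero_iff {M : D} : ExtVanishesAbove X 0 M ↔ perp X M := Iff.rfl

lemma ExtVanishesAbove.mono {m n : ℕ} {M : D} (h : ExtVanishesAbove X m M) (hmn : m ≤ n) :
    ExtVanishesAbove X n M :=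
  fun P hP i hi => h P hP i (by omega)

lemma ExtVanishesAbove.of_iso {n : ℕ} {M M' : D} (h : ExtVanishesAbove X n M) (e : M ≅ M') :
    ExtVanishesAbove X n M' :=
  fun P hP i hi => have := h P hP i hi; Ext.subsingleton_of_iso P e i

lemma perp_of_injective (I : D) [Injective I] : perp X I := by
  rintro P - (_ | i) hi
  · omega
  · exact Ext.subsingleton_of_injective P I i

section ShortExact

variable {S : ShortComplex D} (hS : S.ShortExact) (n : ℕ)
include hS

lemma ExtVanishesAbove.X₂_of_shortExact (h₁ : ExtVanishesAbove X n S.X₁)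
    (h₃ : ExtVanishesAbove X n S.X₃) : ExtVanishesAbove X n S.X₂ := fun P hP i hi =>
  have := h₁ P hP i hi; have := h₃ P hP i hi; hS.subsingleton_ext_X₂ P i

lemma ExtVanishesAbove.X₁_of_shortExact (h₃ : ExtVanishesAbove X n S.X₃)
    (h₂ : ExtVanishesAbove X (n + 1) S.X₂) : ExtVanishesAbove X (n + 1) S.X₁ := by
  rintro P hP (_ | i) hi
  · omega
  · have := h₃ P hP i (by omega)
    have := h₂ P hP (i + 1) hi
    exact hS.subsingleton_ext_X₁ P i

lemma ExtVanishesAbove.X₃_of_shortExact (h₂ : ExtVanishesAbove X n S.X₂)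
    (h₁ : ExtVanishesAbove X (n + 1) S.X₁) : ExtVanishesAbove X n S.X₃ := fun P hP i hi =>
  have := h₂ P hP i hi; have := h₁ P hP (i + 1) (by omega); hS.subsingleton_ext_X₃ P i

end ShortExact

lemma extVanishesAbove_of_coresSeq {n : ℕ} {M Z : D} (hZ : perp X Z)
    (h : CoresSeq (perp X) n M Z) : ExtVanishesAbove X n M := by
  induction n generalizing M with
  | zero => exact ExtVanishesAbove.of_iso hZ h.some.symm
  | succ n ih =>
    obtain ⟨W₀, K, f, g, w, hW₀, hS, hK⟩ := h
    exact ExtVanishesAbove.X₁_of_shortExact hS n (ih hK)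
      ((extVanishesAbove_zero_iff.mpr hW₀).mono (by omega))

lemma exists_coresSeq_of_extVanishesAbove [EnoughInjectives D] {n : ℕ} {M : D}
    (h : ExtVanishesAbove X n M) : ∃ Z, perp X Z ∧ CoresSeq (perp X) n M Z := by
  induction n generalizing M with
  | zero => exact ⟨M, h, ⟨Iso.refl M⟩⟩
  | succ n ih =>
    let ι := Injective.ι M
    have hS : (ShortComplex.mk ι (cokernel.π ι) (cokernel.condition ι)).ShortExact :=
      { exact := ShortComplex.exact_of_g_is_cokernel _ (cokernelIsCokernel ι) }
    have hI : perp X (Injective.under M) := perp_of_injective _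
    obtain ⟨Z, hZ, hc⟩ := ih (ExtVanishesAbove.X₃_of_shortExact hS n
      ((extVanishesAbove_zero_iff.mpr hI).mono (by omega)) h)
    exact ⟨Z, hZ, _, _, ι, cokernel.π ι, cokernel.condition ι, hI, hS, hc⟩

lemma coresDim_perp_le_iff [EnoughInjectives D] (M : D) (n : ℕ) :
    coresDim (perp X) M ≤ n ↔ ExtVanishesAbove X n M := by
  rw [coresDim_le_iff]
  constructor
  · rintro ⟨m, hmn, Z, hZ, hc⟩
    exact (extVanishesAbove_of_coresSeq hZ hc).mono hmn
  · intro h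
    exact ⟨n, le_rfl, exists_coresSeq_of_extVanishesAbove h⟩

end Perp

theorem stmt_1_general [EnoughInjectives D] [HasExt.{w} D]
    (X : D → Prop)
    (A B C : D) (f : A ⟶ B) (g : B ⟶ C) (w : f ≫ g = 0)
    (hse : (ShortComplex.mk f g w).ShortExact) :
    coresDim (perp X) B ≤ max (coresDim (perp X) A) (coresDim (perp X) C) ∧
    coresDim (perp X) C ≤ max (coresDim (perp X) A - 1) (coresDim (perp X) B) ∧
    coresDim (perp X) A ≤ max (coresDim (perp X) B) (coresDim (perp X) C + 1) := by
  refine ⟨ENat.le_max_of_forall_natCast_le fun n hA hC => ?_,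
    ENat.le_max_of_forall_natCast_le fun n hA hB => ?_,
    ENat.le_max_of_forall_natCast_le fun n hB hC => ?_⟩
  · rw [coresDim_perp_le_iff] at hA hC ⊢
    exact ExtVanishesAbove.X₂_of_shortExact hse n hA hC
  · rw [tsub_le_iff_right, ← Nat.cast_add_one, coresDim_perp_le_iff] at hA
    rw [coresDim_perp_le_iff] at hB ⊢
    exact ExtVanishesAbove.X₃_of_shortExact hse n hB hA
  · obtain _ | n := n
    · simp at hC
    rw [Nat.cast_add_one, ENat.add_le_add_iff_right ENat.one_ne_top,
      coresDim_perp_le_iff] at hC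
    rw [coresDim_perp_le_iff] at hB ⊢
    exact ExtVanishesAbove.X₁_of_shortExact hse n hC hB

/-- Lemma 3.4(1) : coresolution dimensions in a short exact sequence `0 → A → B → C → 0`. -/
theorem stmt_1 [EnoughProjectives D] [EnoughInjectives D] [HasExt.{w} D]
    (X : D → Prop) (hX : ∀ A B : D, (A ≅ B) → X A → X B)
    (A B C : D) (f : A ⟶ B) (g : B ⟶ C) (w : f ≫ g = 0)
    (hse : (ShortComplex.mk f g w).ShortExact) :
    coresDim (perp X) B ≤ max (coresDim (perp X) A) (coresDim (perp X) C) ∧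
    coresDim (perp X) C ≤ max (coresDim (perp X) A - 1) (coresDim (perp X) B) ∧
    coresDim (perp X) A ≤ max (coresDim (perp X) B) (coresDim (perp X) C + 1) :=
  stmt_1_general X A B C f g w hse

end Paper
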